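/- Let G be a finite connected graph, and A, B linked, disjoint, saturated subsets of V(G) such that N(A ∪ B) is not a clique. Then for every clique K ⊆ N(A ∪ B), both A ∪ K and B ∪ K are monophonically convex. -/

import Mathlib

open Classical

variable {V : Type*}

namespace Paper

def mInterval (G : SimpleGraph V) (u v : V) : Set V :=
  {w | ∃ p : G.Walk u v, p.IsPath ∧ p.toSubgraph.IsInduced ∧ w ∈ p.support}

def MConvex (G : SimpleGraph V) (C : Set V) : Prop :=
  ∀ u ∈ C, ∀ v ∈ C, mInterval G u v ⊆ C

def mHull (G : SimpleGraph V) (X : Set V) : Set V :=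
  ⋂₀ {C | MConvex G C ∧ X ⊆ C}

def mIntervalSet (G : SimpleGraph V) (Z : Set V) : Set V :=
  ⋃ u ∈ Z, ⋃ v ∈ Z, mInterval G u v

def Sep (G : SimpleGraph V) (A B : Set V) : Prop :=
  ∃ H : Set V, MConvex G H ∧ MConvex G Hᶜ ∧ A ⊆ H ∧ B ⊆ Hᶜ

def nbhd (G : SimpleGraph V) (X : Set V) : Set V :=
  {v | v ∉ X ∧ ∃ x ∈ X, G.Adj x v}

def cnbhd (G : SimpleGraph V) (X : Set V) : Set V := X ∪ nbhd G X

def front (G : SimpleGraph V) (X Y : Set V) : Set V := X ∩ cnbhd G Y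

def IsClique (G : SimpleGraph V) (K : Set V) : Prop :=
  ∀ u ∈ K, ∀ v ∈ K, u ≠ v → G.Adj u v

def shadow (G : SimpleGraph V) (A B : Set V) : Set V :=
  {v | (mHull G (B ∪ {v}) ∩ A).Nonempty}

def Forbidden (G : SimpleGraph V) (A B X : Set V) : Prop :=
  X ⊆ (A ∪ B)ᶜ ∧ (mHull G X ∩ A).Nonempty ∧ (mHull G X ∩ B).Nonempty

def MFS (G : SimpleGraph V) (A B : Set V) : Set (Set V) :=
  {X | Forbidden G A B X ∧ ∀ Y, Y ⊂ X → ¬ Forbidden G A B Y}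

def presat (G : SimpleGraph V) (A B : Set V) : Set V :=
  mHull G (shadow G A B ∪ ⋃ X ∈ MFS G A B, ⋂ x ∈ X, mHull G (A ∪ {x}))

def Linked (G : SimpleGraph V) (A B : Set V) : Prop :=
  ∃ a ∈ A, ∃ b ∈ B, G.Adj a b

def Saturated (G : SimpleGraph V) (A B : Set V) : Prop :=
  A = presat G A B ∧ B = presat G B A

def IsCompOf (G : SimpleGraph V) (W S : Set V) : Prop :=
  S.Nonempty ∧ S ⊆ W ∧ (G.induce S).Connected ∧
    ∀ T, S ⊆ T → T ⊆ W → (G.induce T).Connected → T = S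

def Eqv (G : SimpleGraph V) (A B : Set V) (u v : V) : Prop :=
  u = v ∨ ∃ L : List (Set V), L ≠ [] ∧
    (∀ S ∈ L, IsCompOf G (cnbhd G (A ∪ B))ᶜ S) ∧
    List.Chain' (fun S T => (nbhd G S ∩ nbhd G T).Nonempty) L ∧
    (∃ S₀ ∈ L.head?, u ∈ cnbhd G S₀) ∧
    (∃ Sₖ ∈ L.getLast?, v ∈ cnbhd G Sₖ)

end Paper

open Paper

/-! Saturation makes `A` convex and closed under shadows, so the hull of `A ∪ {v}` misses `B`
whenever `v ∉ B`; with connectivity this forces every vertex of `N(A ∪ B)` to be adjacent to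
every vertex of `A ∪ B` having a neighbour on the other side. For nonadjacent `x, y ∈ N(A ∪ B)`
the pair `{x, y}` is then a minimal forbidden set, so the hulls of `A ∪ {x}` and `A ∪ {y}` meet
only in `A`. As `N(A ∪ B)` is not a clique, this shows that a vertex of `A` adjacent to one vertex
of `N(A ∪ B)` is adjacent to all of them. Hence an induced path from `A` to `v ∈ N(A ∪ B)` leaves
`A` only at its last step, and `A ∪ K` is convex for every clique `K ⊆ N(A ∪ B)`. -/

namespace SimpleGraph.Walk

variable {G : SimpleGraph V} {S : Set V} {u v w : V}

theorem isChordless_nil : (nil : G.Walk u u).IsChordless := by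
  simp [isChordless_iff_forall_mem_edges]

theorem isChordless_cons_iff (h : G.Adj u v) {q : G.Walk v w} (hu : u ∉ q.support) :
    (cons h q).IsChordless ↔ q.IsChordless ∧ ∀ x ∈ q.support, G.Adj u x → x = v := by
  simp only [isChordless_iff_forall_mem_edges, support_cons, edges_cons, List.mem_cons]
  constructor
  · intro hc
    refine ⟨fun a b ha hb hab => ?_, fun x hx hux => ?_⟩
    · rcases hc (Or.inr ha) (Or.inr hb) hab with he | he
      · rw [Sym2.eq_iff] at he
        rcases he with ⟨rfl, -⟩ | ⟨-, rfl⟩ <;> contradiction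
      · exact he
    · rcases hc (Or.inl rfl) (Or.inr hx) hux with he | he
      · simpa [h.ne] using he
      · exact absurd (q.fst_mem_support_of_mem_edges he) hu
  · rintro ⟨hq, hv⟩ a b (rfl | ha) (rfl | hb) hab
    · exact absurd hab (G.irrefl)
    · exact Or.inl (by rw [hv b hb hab])
    · exact Or.inl (by rw [hv a ha hab.symm, Sym2.eq_swap])
    · exact Or.inr (hq ha hb hab)

theorem isPath_isChordless_of_forall_length_le (p : G.Walk u v) (hS : ∀ x ∈ p.support, x ∈ S)
    (hmin : ∀ q : G.Walk u v, (∀ x ∈ q.support, x ∈ S) → p.length ≤ q.length) :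
    p.IsPath ∧ p.IsChordless := by
  induction p with
  | nil => exact ⟨.nil, isChordless_nil⟩
  | @cons u m v h q ih =>
    have hqS : ∀ x ∈ q.support, x ∈ S := fun x hx => hS x (by simp [hx])
    have hshort : ∀ x (hx : x ∈ q.support), G.Adj u x → x = m := by
      intro x hx hux
      by_contra hxm
      have := hmin (cons hux (q.dropUntil x hx)) fun y hy => by
        rcases List.mem_cons.1 (support_cons _ _ ▸ hy) with rfl | hy
        · exact hS _ (by simp)
        · exact hqS y (q.support_dropUntil_subset_support hx hy)
      have := length_dropUntil_lt_length hx hxm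
      simp only [length_cons] at *
      omega
    have hu : u ∉ q.support := fun hu => by
      have := hmin (q.dropUntil u hu) fun y hy => hqS y (q.support_dropUntil_subset_support hu hy)
      have := q.length_dropUntil_le_length hu
      simp only [length_cons] at *
      omega
    obtain ⟨hqp, hqc⟩ := ih hqS fun q' hq' => by
      have := hmin (cons h q') fun y hy => by
        rcases List.mem_cons.1 (support_cons _ _ ▸ hy) with rfl | hy
        · exact hS _ (by simp)
        · exact hq' y hy
      simp only [length_cons] at this
      omega
    exact ⟨hqp.cons hu, (isChordless_cons_iff h hu).2 ⟨hqc, hshort⟩⟩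

theorem exists_isPath_isChordless (p : G.Walk u v) (hS : ∀ x ∈ p.support, x ∈ S) :
    ∃ q : G.Walk u v, q.IsPath ∧ q.IsChordless ∧ ∀ x ∈ q.support, x ∈ S := by
  have hex : ∃ n, ∃ q : G.Walk u v, (∀ x ∈ q.support, x ∈ S) ∧ q.length = n := ⟨_, p, hS, rfl⟩
  obtain ⟨q, hqS, hq⟩ := Nat.find_spec hex
  refine ⟨q, (isPath_isChordless_of_forall_length_le q hqS fun q' hq' => ?_) |>.imp_right
    (⟨·, hqS⟩)⟩
  exact hq ▸ Nat.find_min' hex ⟨q', hq', rfl⟩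

end SimpleGraph.Walk

namespace Paper

open SimpleGraph (Walk)

variable {G : SimpleGraph V} {A B C K X : Set V} {a a' b b' u u' v w x y z : V}

theorem mem_mInterval_iff :
    w ∈ mInterval G u v ↔ ∃ p : G.Walk u v, p.IsPath ∧ p.IsChordless ∧ w ∈ p.support := by
  simp only [mInterval, Set.mem_ofPred_eq, Walk.isInduced_toSubgraph]

theorem mInterval_subset_comm : mInterval G u v ⊆ mInterval G v u := by
  rintro w ⟨p, hp, hi, hw⟩
  exact ⟨p.reverse, hp.reverse, by rwa [Walk.toSubgraph_reverse], by simpa using hw⟩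

theorem mInterval_comm (u v : V) : mInterval G u v = mInterval G v u :=
  mInterval_subset_comm.antisymm mInterval_subset_comm

theorem mInterval_self : mInterval G u u ⊆ {u} := by
  rintro w ⟨p, hp, -, hw⟩
  simpa [Walk.nil_iff_support_eq.1 (Walk.isPath_iff_nil.1 hp)] using hw

theorem mInterval_subset_of_adj (h : G.Adj u v) : mInterval G u v ⊆ {u, v} := by
  intro w hw
  obtain ⟨p, hp, hc, hw⟩ := mem_mInterval_iff.1 hw
  cases p with
  | nil => exact absurd rfl h.ne
  | cons h' q =>
    have hu := ((Walk.cons_isPath_iff _ _).1 hp).2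
    obtain rfl := ((Walk.isChordless_cons_iff h' hu).1 hc).2 _ q.end_mem_support h
    have hq := Walk.nil_iff_support_eq.1 (Walk.isPath_iff_nil.1 ((Walk.cons_isPath_iff _ _).1 hp).1)
    simpa [hq] using hw

theorem mem_mInterval_of_adj_of_adj (huw : G.Adj u w) (hwv : G.Adj w v) (huv : ¬ G.Adj u v)
    (hne : u ≠ v) : w ∈ mInterval G u v := by
  have hp : (Walk.cons huw (Walk.cons hwv Walk.nil)).IsPath := by
    simp [Walk.cons_isPath_iff, huw.ne, hwv.ne, hne]
  refine mem_mInterval_iff.2 ⟨_, hp, ?_, by simp⟩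
  rw [Walk.isChordless_cons_iff _ (by simp [huw.ne, hne]),
    Walk.isChordless_cons_iff _ (by simp [hwv.ne])]
  simp_all [Walk.isChordless_nil]

theorem mem_mInterval_of_adj_of_adj_of_adj (hux : G.Adj u x) (hxy : G.Adj x y) (hyv : G.Adj y v)
    (huy : ¬ G.Adj u y) (huv : ¬ G.Adj u v) (hxv : ¬ G.Adj x v) (hne : u ≠ y) (hne' : u ≠ v)
    (hne'' : x ≠ v) : y ∈ mInterval G u v := by
  have hp : (Walk.cons hux (Walk.cons hxy (Walk.cons hyv Walk.nil))).IsPath := by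
    simp [Walk.cons_isPath_iff, hux.ne, hxy.ne, hyv.ne, hne, hne', hne'']
  refine mem_mInterval_iff.2 ⟨_, hp, ?_, by simp⟩
  rw [Walk.isChordless_cons_iff _ (by simp [hux.ne, hne, hne']),
    Walk.isChordless_cons_iff _ (by simp [hxy.ne, hne'']),
    Walk.isChordless_cons_iff _ (by simp [hyv.ne])]
  simp_all [Walk.isChordless_nil]

theorem subset_mHull (G : SimpleGraph V) (X : Set V) : X ⊆ mHull G X :=
  fun _ hx _ hC => hC.2 hx

theorem mConvex_mHull : MConvex G (mHull G X) :=
  fun _ hu _ hv _ hw C hC => hC.1 _ (hu C hC) _ (hv C hC) hw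

theorem mHull_min (hXC : X ⊆ C) (hC : MConvex G C) : mHull G X ⊆ C :=
  fun _ hw => hw C ⟨hC, hXC⟩

theorem mInterval_subset_mHull (hu : u ∈ X) (hv : v ∈ X) : mInterval G u v ⊆ mHull G X :=
  mConvex_mHull u (subset_mHull G X hu) v (subset_mHull G X hv)

theorem mInterval_subset_mHull_union_singleton (hu : u ∈ X) :
    mInterval G u v ⊆ mHull G (X ∪ {v}) :=
  mInterval_subset_mHull (Or.inl hu) (Or.inr rfl)

theorem mConvex_of_subsingleton (hC : C.Subsingleton) : MConvex G C := by
  intro u hu v hv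
  obtain rfl := hC hu hv
  exact mInterval_self.trans (Set.singleton_subset_iff.2 hu)

theorem MConvex.exists_walk (hC : MConvex G C) (hG : G.Preconnected) (hu : u ∈ C) (hv : v ∈ C) :
    ∃ p : G.Walk u v, ∀ x ∈ p.support, x ∈ C := by
  obtain ⟨p, hp, hc, -⟩ := Walk.exists_isPath_isChordless (S := Set.univ) (hG u v).some
    fun _ _ => trivial
  exact ⟨p, fun x hx => hC u hu v hv (mem_mInterval_iff.2 ⟨p, hp, hc, hx⟩)⟩

theorem MConvex.union_of_isClique (hC : MConvex G C) (hK : IsClique G K)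
    (hCK : ∀ c ∈ C, ∀ k ∈ K, mInterval G c k ⊆ C ∪ K) : MConvex G (C ∪ K) := by
  rintro u (hu | hu) v (hv | hv)
  · exact (hC u hu v hv).trans Set.subset_union_left
  · exact hCK u hu v hv
  · exact mInterval_comm u v ▸ hCK v hv u hu
  · obtain rfl | huv := eq_or_ne u v
    · exact mInterval_self.trans (by simpa using Or.inr hu)
    · exact (mInterval_subset_of_adj (hK u hu v hv huv)).trans
        (by simp [Set.insert_subset_iff, hu, hv])

theorem mConvex_of_eq_presat (hA : A = presat G A B) : MConvex G A :=
  hA ▸ mConvex_mHull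

theorem shadow_subset_of_eq_presat (hA : A = presat G A B) : shadow G A B ⊆ A := by
  conv_rhs => rw [hA]
  exact (Set.subset_union_left).trans (subset_mHull _ _)

theorem biInter_mHull_subset_of_mem_MFS (hA : A = presat G A B) (hX : X ∈ MFS G A B) :
    ⋂ x ∈ X, mHull G (A ∪ {x}) ⊆ A := by
  conv_rhs => rw [hA]
  exact (Set.subset_biUnion_of_mem (u := fun X => ⋂ x ∈ X, mHull G (A ∪ {x})) hX).trans
    ((Set.subset_union_right).trans (subset_mHull _ _))

theorem not_forbidden_of_subsingleton (hX : X.Subsingleton) : ¬ Forbidden G A B X := by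
  rintro ⟨hXAB, ⟨w, hwX, hwA⟩, -⟩
  exact hXAB (mHull_min subset_rfl (mConvex_of_subsingleton hX) hwX) (Or.inl hwA)

theorem pair_mem_MFS (hx : x ∉ A ∪ B) (hy : y ∉ A ∪ B) (hxy : x ≠ y)
    (hA : (mHull G {x, y} ∩ A).Nonempty) (hB : (mHull G {x, y} ∩ B).Nonempty) :
    {x, y} ∈ MFS G A B := by
  refine ⟨⟨Set.insert_subset_iff.2 ⟨hx, Set.singleton_subset_iff.2 hy⟩, hA, hB⟩, fun Y hY => ?_⟩
  refine not_forbidden_of_subsingleton fun s hs t ht => by_contra fun hst => hY.not_subset ?_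
  have hs' := hY.subset hs
  have ht' := hY.subset ht
  simp only [Set.mem_insert_iff, Set.mem_singleton_iff] at hs' ht'
  rcases hs' with rfl | rfl <;> rcases ht' with rfl | rfl <;>
    simp_all [Set.insert_subset_iff]

theorem adj_of_eq_presat (hA : A = presat G A B) (hG : G.Preconnected) (hu : u ∉ A ∪ B)
    (ha : a ∈ A) (hau : G.Adj a u) (ha' : a' ∈ A) (hb : b ∈ B) (ha'b : G.Adj a' b) :
    G.Adj u b := by
  obtain ⟨p, hp⟩ := (mConvex_of_eq_presat hA).exists_walk hG ha ha'
  obtain ⟨q, hq, hqc, hqS⟩ := Walk.exists_isPath_isChordless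
    (S := insert u (insert b A)) (.cons hau.symm (p.concat ha'b)) (by
      intro x hx
      simp only [Walk.support_cons, Walk.support_concat, List.mem_cons, List.mem_append,
        List.mem_nil_iff, or_false] at hx
      rcases hx with rfl | (hx | rfl)
      · exact Set.mem_insert _ _
      · exact Set.mem_insert_of_mem _ (Set.mem_insert_of_mem _ (hp x hx))
      · exact Set.mem_insert_of_mem _ (Set.mem_insert _ _))
  -- `mHull G (B ∪ {u})` misses `A` since `u ∉ A`, so the induced path `q` avoids `A`.
  have hqA : ∀ x ∈ q.support, x ∉ A := fun x hx hxA => hu <| Or.inl <|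
    shadow_subset_of_eq_presat hA ⟨x, mInterval_subset_mHull (X := B ∪ {u}) (Or.inr rfl) (Or.inl hb)
      (mem_mInterval_iff.2 ⟨q, hq, hqc, hx⟩), hxA⟩
  cases q with
  | nil => exact absurd (Or.inr hb) hu
  | @cons _ m _ h r =>
    have hm := hqS m (by simp)
    simp only [Set.mem_insert_iff] at hm
    rcases hm with rfl | rfl | hm
    · exact absurd h (G.irrefl)
    · exact h
    · exact absurd hm (hqA _ (by simp))

theorem Saturated.symm (hS : Saturated G A B) : Saturated G B A := And.symm hS

theorem Linked.symm (hL : Linked G A B) : Linked G B A :=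
  let ⟨a, ha, b, hb, h⟩ := hL
  ⟨b, hb, a, ha, h.symm⟩

theorem nbhd_union_comm : nbhd G (A ∪ B) = nbhd G (B ∪ A) := by
  rw [Set.union_comm]

theorem adj_right_of_mem_nbhd (hG : G.Preconnected) (hS : Saturated G A B) (hL : Linked G A B)
    (hu : u ∈ nbhd G (A ∪ B)) (ha' : a' ∈ A) (hb : b ∈ B) (ha'b : G.Adj a' b) : G.Adj u b := by
  obtain ⟨huAB, x, hx | hx, hxu⟩ := hu
  · exact adj_of_eq_presat hS.1 hG huAB hx hxu ha' hb ha'b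
  · obtain ⟨a₀, ha₀, b₀, hb₀, h₀⟩ := hL
    have hua₀ : G.Adj u a₀ :=
      adj_of_eq_presat hS.2 hG (by rwa [Set.union_comm]) hx hxu hb₀ ha₀ h₀.symm
    exact adj_of_eq_presat hS.1 hG huAB ha₀ hua₀.symm ha' hb ha'b

theorem adj_left_of_mem_nbhd (hG : G.Preconnected) (hS : Saturated G A B) (hL : Linked G A B)
    (hu : u ∈ nbhd G (A ∪ B)) (ha : a ∈ A) (hb' : b' ∈ B) (hab' : G.Adj a b') : G.Adj u a :=
  adj_right_of_mem_nbhd hG hS.symm hL.symm (nbhd_union_comm ▸ hu) hb' ha hab'.symm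

theorem adj_of_adj_of_not_adj (hG : G.Preconnected) (hS : Saturated G A B) (hL : Linked G A B)
    (hd : Disjoint A B) (hu : u ∈ nbhd G (A ∪ B)) (hu' : u' ∈ nbhd G (A ∪ B)) (hne : u ≠ u')
    (hn : ¬ G.Adj u u') (ha : a ∈ A) (hau : G.Adj a u) : G.Adj a u' := by
  by_cases hfront : ∃ b ∈ B, G.Adj a b
  · obtain ⟨b, hb, hab⟩ := hfront
    exact (adj_left_of_mem_nbhd hG hS hL hu' ha hb hab).symm
  push Not at hfront
  by_contra hau'
  obtain ⟨a₀, ha₀, b₀, hb₀, h₀⟩ := id hL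
  have hpath : b₀ ∈ mInterval G a u' :=
    mem_mInterval_of_adj_of_adj_of_adj hau (adj_right_of_mem_nbhd hG hS hL hu ha₀ hb₀ h₀)
      (adj_right_of_mem_nbhd hG hS hL hu' ha₀ hb₀ h₀).symm (hfront b₀ hb₀) hau' hn
      (hd.ne_of_mem ha hb₀) (fun h => hu'.1 (Or.inl (h ▸ ha))) hne
  exact hu'.1 <| Or.inr <| shadow_subset_of_eq_presat hS.2
    ⟨b₀, mInterval_subset_mHull_union_singleton ha hpath, hb₀⟩

theorem mHull_inter_mHull_subset (hG : G.Preconnected) (hS : Saturated G A B)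
    (hL : Linked G A B) (hx : x ∈ nbhd G (A ∪ B)) (hy : y ∈ nbhd G (A ∪ B)) (hxy : x ≠ y)
    (hn : ¬ G.Adj x y) : mHull G (A ∪ {x}) ∩ mHull G (A ∪ {y}) ⊆ A := by
  obtain ⟨a₀, ha₀, b₀, hb₀, h₀⟩ := id hL
  have hcommon : ∀ c, G.Adj x c → G.Adj y c → c ∈ mHull G {x, y} := fun c hxc hyc =>
    mInterval_subset_mHull (Set.mem_insert x {y}) (Set.mem_insert_of_mem x rfl)
      (mem_mInterval_of_adj_of_adj hxc hyc.symm hn hxy)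
  have hMFS : {x, y} ∈ MFS G A B := pair_mem_MFS hx.1 hy.1 hxy
    ⟨a₀, hcommon a₀ (adj_left_of_mem_nbhd hG hS hL hx ha₀ hb₀ h₀)
      (adj_left_of_mem_nbhd hG hS hL hy ha₀ hb₀ h₀), ha₀⟩
    ⟨b₀, hcommon b₀ (adj_right_of_mem_nbhd hG hS hL hx ha₀ hb₀ h₀)
      (adj_right_of_mem_nbhd hG hS hL hy ha₀ hb₀ h₀), hb₀⟩
  intro w hw
  exact biInter_mHull_subset_of_mem_MFS hS.1 hMFS (by simpa using hw)

theorem exists_nonadj_pair (hG : G.Preconnected) (hS : Saturated G A B) (hL : Linked G A B)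
    (hd : Disjoint A B) (hnc : ¬ IsClique G (nbhd G (A ∪ B))) (ha : a ∈ A)
    (hv : v ∈ nbhd G (A ∪ B)) (hav : ¬ G.Adj a v) :
    ∃ x ∈ nbhd G (A ∪ B), ∃ y ∈ nbhd G (A ∪ B), x ≠ y ∧ ¬ G.Adj x y ∧
      ¬ G.Adj a x ∧ ¬ G.Adj a y := by
  by_cases h : ∃ u ∈ nbhd G (A ∪ B), u ≠ v ∧ ¬ G.Adj u v
  · obtain ⟨u, hu, huv, hn⟩ := h
    exact ⟨u, hu, v, hv, huv, hn,
      fun hau => hav (adj_of_adj_of_not_adj hG hS hL hd hu hv huv hn ha hau), hav⟩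
  push Not at h
  obtain ⟨x, hx, y, hy, hxy, hn⟩ :
      ∃ x ∈ nbhd G (A ∪ B), ∃ y ∈ nbhd G (A ∪ B), x ≠ y ∧ ¬ G.Adj x y := by
    simpa [IsClique] using hnc
  refine ⟨x, hx, y, hy, hxy, hn, ?_⟩
  suffices hax : ¬ G.Adj a x from
    ⟨hax, hax ∘ adj_of_adj_of_not_adj hG hS hL hd hy hx hxy.symm (hn ∘ .symm) ha⟩
  intro hax
  have hay := adj_of_adj_of_not_adj hG hS hL hd hx hy hxy hn ha hax
  have hxv : G.Adj x v := h x hx (by rintro rfl; exact hn (h y hy hxy.symm).symm)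
  have hyv : G.Adj y v := h y hy (by rintro rfl; exact hn (h x hx hxy))
  have hav' : a ≠ v := fun h => hv.1 (Or.inl (h ▸ ha))
  have hxH := mInterval_subset_mHull_union_singleton ha
    (mem_mInterval_of_adj_of_adj hax hxv hav hav')
  have hyH := mInterval_subset_mHull_union_singleton ha
    (mem_mInterval_of_adj_of_adj hay hyv hav hav')
  obtain ⟨a₀, ha₀, b₀, hb₀, h₀⟩ := id hL
  have hb₀H : b₀ ∈ mHull G (A ∪ {v}) := mConvex_mHull x hxH y hyH
    (mem_mInterval_of_adj_of_adj (adj_right_of_mem_nbhd hG hS hL hx ha₀ hb₀ h₀)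
      (adj_right_of_mem_nbhd hG hS hL hy ha₀ hb₀ h₀).symm hn hxy)
  exact hv.1 (Or.inr (shadow_subset_of_eq_presat hS.2 ⟨b₀, hb₀H, hb₀⟩))

theorem mem_mHull_union_singleton (hG : G.Preconnected) (hS : Saturated G A B)
    (hL : Linked G A B) (hd : Disjoint A B) (ha : a ∈ A) (hz : z ∈ nbhd G (A ∪ B))
    (hu : u ∈ nbhd G (A ∪ B)) (haz : G.Adj a z) (hau : ¬ G.Adj a u) :
    z ∈ mHull G (A ∪ {u}) := by
  obtain rfl | hzu := eq_or_ne z u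
  · exact subset_mHull _ _ (Or.inr rfl)
  by_cases hzu' : G.Adj z u
  · exact mInterval_subset_mHull_union_singleton ha
      (mem_mInterval_of_adj_of_adj haz hzu' hau fun h => hu.1 (Or.inl (h ▸ ha)))
  · exact absurd (adj_of_adj_of_not_adj hG hS hL hd hz hu hzu hzu' ha haz) hau

theorem adj_of_adj_of_mem_nbhd (hG : G.Preconnected) (hS : Saturated G A B) (hL : Linked G A B)
    (hd : Disjoint A B) (hnc : ¬ IsClique G (nbhd G (A ∪ B))) (ha : a ∈ A)
    (hz : z ∈ nbhd G (A ∪ B)) (hv : v ∈ nbhd G (A ∪ B)) (haz : G.Adj a z) : G.Adj a v := by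
  by_contra hav
  obtain ⟨x, hx, y, hy, hxy, hn, hax, hay⟩ := exists_nonadj_pair hG hS hL hd hnc ha hv hav
  exact hz.1 <| Or.inl <| mHull_inter_mHull_subset hG hS hL hx hy hxy hn
    ⟨mem_mHull_union_singleton hG hS hL hd ha hz hx haz hax,
      mem_mHull_union_singleton hG hS hL hd ha hz hy haz hay⟩

theorem support_subset_of_isChordless (hG : G.Preconnected) (hS : Saturated G A B)
    (hL : Linked G A B) (hd : Disjoint A B) (hnc : ¬ IsClique G (nbhd G (A ∪ B)))
    (hv : v ∈ nbhd G (A ∪ B)) :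
    ∀ {a} (p : G.Walk a v), a ∈ A → p.IsPath → p.IsChordless → ∀ w ∈ p.support, w ∈ A ∪ {v}
  | _, .nil, ha, _, _, w, hw => by simp_all
  | a, .cons (v := m) h q, ha, hp, hc, w, hw => by
    have hau := ((Walk.cons_isPath_iff _ _).1 hp).2
    have hq := (Walk.isChordless_cons_iff h hau).1 hc
    rcases List.mem_cons.1 (Walk.support_cons _ _ ▸ hw) with rfl | hw
    · exact Or.inl ha
    by_cases hm : m ∈ A
    · exact support_subset_of_isChordless hG hS hL hd hnc hv q hm hp.of_cons hq.1 w hw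
    have hmv : m = v := by
      by_contra hmv
      have hmH : m ∈ mHull G (A ∪ {v}) :=
        mInterval_subset_mHull_union_singleton ha (mem_mInterval_iff.2 ⟨_, hp, hc, by simp⟩)
      have hmB : m ∉ B := fun hmB => hv.1 (Or.inr (shadow_subset_of_eq_presat hS.2 ⟨m, hmH, hmB⟩))
      have hav := adj_of_adj_of_mem_nbhd hG hS hL hd hnc ha
        ⟨by simp [hm, hmB], a, Or.inl ha, h⟩ hv h
      exact hmv (hq.2 v q.end_mem_support hav).symm
    subst hmv
    exact Or.inr (by simpa [Walk.nil_iff_support_eq.1 (Walk.isPath_iff_nil.1 hp.of_cons)] using hw)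

theorem mConvex_union_of_subset_nbhd (hG : G.Preconnected) (hS : Saturated G A B)
    (hL : Linked G A B) (hd : Disjoint A B) (hnc : ¬ IsClique G (nbhd G (A ∪ B)))
    (hK : K ⊆ nbhd G (A ∪ B)) (hKc : IsClique G K) : MConvex G (A ∪ K) := by
  refine (mConvex_of_eq_presat hS.1).union_of_isClique hKc fun a ha k hk w hw => ?_
  obtain ⟨p, hp, hc, hw⟩ := mem_mInterval_iff.1 hw
  rcases support_subset_of_isChordless hG hS hL hd hnc (hK hk) p ha hp hc w hw with hw | rfl
  exacts [Or.inl hw, Or.inr hk]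

end Paper

theorem stmt_13_general (G : SimpleGraph V) (hG : G.Connected)
    (A B : Set V) (hL : Linked G A B) (hd : Disjoint A B)
    (hS : Saturated G A B) (hnc : ¬ IsClique G (nbhd G (A ∪ B)))
    (K : Set V) (hK : K ⊆ nbhd G (A ∪ B)) (hKc : IsClique G K) :
    MConvex G (A ∪ K) ∧ MConvex G (B ∪ K) := by
  refine ⟨mConvex_union_of_subset_nbhd hG.preconnected hS hL hd hnc hK hKc, ?_⟩
  rw [nbhd_union_comm] at hnc hK
  exact mConvex_union_of_subset_nbhd hG.preconnected hS.symm hL.symm hd.symm hnc hK hKc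

theorem stmt_13 [Fintype V] (G : SimpleGraph V) (hG : G.Connected)
    (A B : Set V) (hL : Linked G A B) (hd : Disjoint A B)
    (hS : Saturated G A B) (hnc : ¬ IsClique G (nbhd G (A ∪ B)))
    (K : Set V) (hK : K ⊆ nbhd G (A ∪ B)) (hKc : IsClique G K) :
    MConvex G (A ∪ K) ∧ MConvex G (B ∪ K) :=
  stmt_13_general G hG A B hL hd hS hnc K hK hKc
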